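/- Let C be a category with zero morphisms, a zero object, and phased biproducts of every pair of objects. Then all phased coproducts in C have transitive phases: for every diagonal morphism f : A +̇ B → C +̇ D between phased coproducts and every phase U of A +̇ B, there is a phase V of C +̇ D with f ∘ U = V ∘ f. -/

import Mathlib

open CategoryTheory CategoryTheory.Limits

universe v u

variable {C : Type u} [Category.{v} C]

/-- Phased coproduct of a family of objects. -/
structure IsPhasedCoproduct {ι : Type*} (A : ι → C) (P : C) (κ : ∀ i, A i ⟶ P) : Prop where
  lift : ∀ {D : C} (f : ∀ i, A i ⟶ D), ∃ h : P ⟶ D, ∀ i, κ i ≫ h = f i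
  phase : ∀ {D : C} (h h' : P ⟶ D), (∀ i, κ i ≫ h = κ i ≫ h') →
    ∃ U : P ⟶ P, (∀ i, κ i ≫ U = κ i) ∧ h' = U ≫ h

/-- Binary phased coproduct. -/
structure IsPhasedCoproduct₂ (A B P : C) (κA : A ⟶ P) (κB : B ⟶ P) : Prop where
  lift : ∀ {D : C} (f : A ⟶ D) (g : B ⟶ D), ∃ h : P ⟶ D, κA ≫ h = f ∧ κB ≫ h = g
  phase : ∀ {D : C} (h h' : P ⟶ D), κA ≫ h = κA ≫ h' → κB ≫ h = κB ≫ h' →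
    ∃ U : P ⟶ P, (κA ≫ U = κA ∧ κB ≫ U = κB) ∧ h' = U ≫ h

/-- Binary (actual) coproduct, phrased elementarily. -/
def IsCoproduct₂ (A B P : C) (κA : A ⟶ P) (κB : B ⟶ P) : Prop :=
  ∀ {D : C} (f : A ⟶ D) (g : B ⟶ D), ∃! h : P ⟶ D, κA ≫ h = f ∧ κB ≫ h = g

/-- Phased initial object. -/
structure IsPhasedInitial (Z : C) : Prop where
  exists_hom : ∀ A : C, Nonempty (Z ⟶ A)
  phase : ∀ {A : C} (a b : Z ⟶ A), ∃ U : Z ⟶ Z, b = U ≫ a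

/-- The category has phased coproducts of all pairs of objects. -/
def HasPhasedCoproducts₂ (C : Type u) [Category.{v} C] : Prop :=
  ∀ A B : C, ∃ (P : C) (κA : A ⟶ P) (κB : B ⟶ P), IsPhasedCoproduct₂ A B P κA κB

/-- All coprojections of binary phased coproducts are monic. -/
def MonicPhasedCoproducts (C : Type u) [Category.{v} C] : Prop :=
  ∀ {A B P : C} {κA : A ⟶ P} {κB : B ⟶ P},
    IsPhasedCoproduct₂ A B P κA κB → Mono κA ∧ Mono κB

/-- Transitive phases: every diagonal morphism intertwines phases with phases. -/
def PhasesTransitive (C : Type u) [Category.{v} C] : Prop :=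
  ∀ {A B P : C} {κA : A ⟶ P} {κB : B ⟶ P} {A' B' P' : C} {κA' : A' ⟶ P'} {κB' : B' ⟶ P'},
    IsPhasedCoproduct₂ A B P κA κB → IsPhasedCoproduct₂ A' B' P' κA' κB' →
    ∀ f : P ⟶ P', (∃ g, κA ≫ f = g ≫ κA') → (∃ h, κB ≫ f = h ≫ κB') →
    ∀ U : P ⟶ P, κA ≫ U = κA → κB ≫ U = κB →
    ∃ V : P' ⟶ P', (κA' ≫ V = κA' ∧ κB' ≫ V = κB') ∧ U ≫ f = f ≫ V

/-- Phase generator. -/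
structure IsPhaseGenerator (Gen : C) : Prop where
  phaseMonic : ∀ {P : C} {κ₁ κ₂ : Gen ⟶ P}, IsPhasedCoproduct₂ Gen Gen P κ₁ κ₂ →
    ∀ d : P ⟶ Gen, κ₁ ≫ d = 𝟙 Gen → κ₂ ≫ d = 𝟙 Gen →
    ∀ U V : P ⟶ P, (κ₁ ≫ U = κ₁ ∧ κ₂ ≫ U = κ₂) → (κ₁ ≫ V = κ₁ ∧ κ₂ ≫ V = κ₂) →
      U ≫ d = V ≫ d → U = V
  phaseEpic : ∀ {P : C} {κ₁ κ₂ : Gen ⟶ P}, IsPhasedCoproduct₂ Gen Gen P κ₁ κ₂ →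
    ∀ {A B Q : C} {κA : A ⟶ Q} {κB : B ⟶ Q}, IsPhasedCoproduct₂ A B Q κA κB →
    ∀ m : P ⟶ Q, Mono m → (∃ g, κ₁ ≫ m = g ≫ κA) → (∃ h, κ₂ ≫ m = h ≫ κB) →
    ∀ U V : Q ⟶ Q, (κA ≫ U = κA ∧ κB ≫ U = κB) → (κA ≫ V = κA ∧ κB ≫ V = κB) →
      m ≫ U = m ≫ V → U = V

/-- Binary phased product (dual to a binary phased coproduct). -/
structure IsPhasedProduct₂ (A B Q : C) (πA : Q ⟶ A) (πB : Q ⟶ B) : Prop where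
  lift : ∀ {D : C} (f : D ⟶ A) (g : D ⟶ B), ∃ h : D ⟶ Q, h ≫ πA = f ∧ h ≫ πB = g
  phase : ∀ {D : C} (h h' : D ⟶ Q), h ≫ πA = h' ≫ πA → h ≫ πB = h' ≫ πB →
    ∃ U : Q ⟶ Q, (U ≫ πA = πA ∧ U ≫ πB = πB) ∧ h' = h ≫ U

/-- Phased product of a family of objects. -/
structure IsPhasedProduct {ι : Type*} (A : ι → C) (Q : C) (π : ∀ i, Q ⟶ A i) : Prop where
  lift : ∀ {D : C} (f : ∀ i, D ⟶ A i), ∃ h : D ⟶ Q, ∀ i, h ≫ π i = f i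
  phase : ∀ {D : C} (h h' : D ⟶ Q), (∀ i, h ≫ π i = h' ≫ π i) →
    ∃ U : Q ⟶ Q, (∀ i, U ≫ π i = π i) ∧ h' = h ≫ U

section ZeroMorphisms

variable [HasZeroMorphisms C]

/-- Binary phased biproduct: a simultaneous phased coproduct and phased product with
the usual biproduct equations, such that the coproduct and the product have the same
phases. -/
structure IsPhasedBiproduct₂ (A B P : C) (κA : A ⟶ P) (κB : B ⟶ P)
    (πA : P ⟶ A) (πB : P ⟶ B) : Prop where
  κAπA : κA ≫ πA = 𝟙 A
  κBπB : κB ≫ πB = 𝟙 B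
  κAπB : κA ≫ πB = 0
  κBπA : κB ≫ πA = 0
  coprod : IsPhasedCoproduct₂ A B P κA κB
  prod : IsPhasedProduct₂ A B P πA πB
  phases_eq : ∀ U : P ⟶ P,
    (κA ≫ U = κA ∧ κB ≫ U = κB) ↔ (U ≫ πA = πA ∧ U ≫ πB = πB)

/-- Phased biproduct of a family of objects. -/
structure IsPhasedBiproduct {ι : Type*} (A : ι → C) (P : C)
    (κ : ∀ i, A i ⟶ P) (π : ∀ i, P ⟶ A i) : Prop where
  diag : ∀ i, κ i ≫ π i = 𝟙 (A i)
  offdiag : ∀ i j, i ≠ j → κ i ≫ π j = 0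
  coprod : IsPhasedCoproduct A P κ
  prod : IsPhasedProduct A P π
  phases_eq : ∀ U : P ⟶ P, (∀ i, κ i ≫ U = κ i) ↔ (∀ i, U ≫ π i = π i)

end ZeroMorphisms

/-!
Any two phased coproducts of the same pair are isomorphic compatibly with the coprojections,
since the comparison maps compose to phases and phases are invertible. Conjugating by such
isomorphisms reduces the claim to phased biproducts, where a diagonal morphism commutes with the
projections; hence `U ≫ f` and `f` agree after both projections and differ by a phase of the
phased product, which is a phase of the coproduct as well.
-/

namespace IsPhasedCoproduct₂

variable {A B P : C} {κA : A ⟶ P} {κB : B ⟶ P}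

theorem isIso_of_phase (hP : IsPhasedCoproduct₂ A B P κA κB) {U : P ⟶ P}
    (hA : κA ≫ U = κA) (hB : κB ≫ U = κB) : IsIso U := by
  obtain ⟨W, ⟨hWA, hWB⟩, hWU⟩ := hP.phase U (𝟙 P) (by rw [hA, Category.comp_id])
    (by rw [hB, Category.comp_id])
  obtain ⟨W', -, hW'W⟩ := hP.phase W (𝟙 P) (by rw [hWA, Category.comp_id])
    (by rw [hWB, Category.comp_id])
  have hUW' : U = W' := by
    rw [← Category.id_comp U, hW'W, Category.assoc, ← hWU, Category.comp_id]
  exact ⟨⟨W, by rw [hUW', ← hW'W], hWU.symm⟩⟩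

theorem exists_iso (hP : IsPhasedCoproduct₂ A B P κA κB) {P' : C} {κA' : A ⟶ P'}
    {κB' : B ⟶ P'} (hP' : IsPhasedCoproduct₂ A B P' κA' κB') :
    ∃ e : P ≅ P', κA ≫ e.hom = κA' ∧ κB ≫ e.hom = κB' := by
  obtain ⟨s, hsA, hsB⟩ := hP.lift κA' κB'
  obtain ⟨t, htA, htB⟩ := hP'.lift κA κB
  have : IsIso (s ≫ t) :=
    hP.isIso_of_phase (by rw [reassoc_of% hsA, htA]) (by rw [reassoc_of% hsB, htB])
  have : IsIso (t ≫ s) :=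
    hP'.isIso_of_phase (by rw [reassoc_of% htA, hsA]) (by rw [reassoc_of% htB, hsB])
  have : Mono s := mono_of_mono s t
  have : IsSplitEpi s := IsSplitEpi.mk' ⟨inv (t ≫ s) ≫ t, by simp⟩
  have : IsIso s := isIso_of_mono_of_isSplitEpi s
  exact ⟨asIso s, hsA, hsB⟩

end IsPhasedCoproduct₂

theorem phase_conj {A B P P' : C} {κA : A ⟶ P} {κB : B ⟶ P} {κA' : A ⟶ P'} {κB' : B ⟶ P'}
    (e : P ≅ P') (heA : κA ≫ e.hom = κA') (heB : κB ≫ e.hom = κB') {U : P ⟶ P}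
    (hUA : κA ≫ U = κA) (hUB : κB ≫ U = κB) :
    κA' ≫ e.inv ≫ U ≫ e.hom = κA' ∧ κB' ≫ e.inv ≫ U ≫ e.hom = κB' := by
  subst heA heB
  simp [reassoc_of% hUA, reassoc_of% hUB]

namespace IsPhasedBiproduct₂

variable [HasZeroMorphisms C] {A B P : C} {κA : A ⟶ P} {κB : B ⟶ P} {πA : P ⟶ A} {πB : P ⟶ B}

theorem eq_fst_comp (hP : IsPhasedBiproduct₂ A B P κA κB πA πB) {D : C} {h : P ⟶ D}
    {d : A ⟶ D} (hA : κA ≫ h = d) (hB : κB ≫ h = 0) : h = πA ≫ d := by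
  obtain ⟨W, hW, rfl⟩ := hP.coprod.phase (πA ≫ d) h
    (by rw [reassoc_of% hP.κAπA, hA]) (by rw [reassoc_of% hP.κBπA, hB, zero_comp])
  rw [reassoc_of% ((hP.phases_eq W).1 hW).1]

theorem eq_snd_comp (hP : IsPhasedBiproduct₂ A B P κA κB πA πB) {D : C} {h : P ⟶ D}
    {d : B ⟶ D} (hA : κA ≫ h = 0) (hB : κB ≫ h = d) : h = πB ≫ d := by
  obtain ⟨W, hW, rfl⟩ := hP.coprod.phase (πB ≫ d) h
    (by rw [reassoc_of% hP.κAπB, hA, zero_comp]) (by rw [reassoc_of% hP.κBπB, hB])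
  rw [reassoc_of% ((hP.phases_eq W).1 hW).2]

theorem exists_phase_comp_eq_comp_phase (hP : IsPhasedBiproduct₂ A B P κA κB πA πB)
    {A' B' P' : C} {κA' : A' ⟶ P'} {κB' : B' ⟶ P'} {πA' : P' ⟶ A'} {πB' : P' ⟶ B'}
    (hP' : IsPhasedBiproduct₂ A' B' P' κA' κB' πA' πB') {f : P ⟶ P'} {g : A ⟶ A'}
    {h : B ⟶ B'} (hfA : κA ≫ f = g ≫ κA') (hfB : κB ≫ f = h ≫ κB') {U : P ⟶ P}
    (hUA : κA ≫ U = κA) (hUB : κB ≫ U = κB) :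
    ∃ V : P' ⟶ P', (κA' ≫ V = κA' ∧ κB' ≫ V = κB') ∧ U ≫ f = f ≫ V := by
  have hfπA : f ≫ πA' = πA ≫ g := hP.eq_fst_comp
    (by rw [reassoc_of% hfA, hP'.κAπA, Category.comp_id])
    (by rw [reassoc_of% hfB, hP'.κBπA, comp_zero])
  have hfπB : f ≫ πB' = πB ≫ h := hP.eq_snd_comp
    (by rw [reassoc_of% hfA, hP'.κAπB, comp_zero])
    (by rw [reassoc_of% hfB, hP'.κBπB, Category.comp_id])
  obtain ⟨hUπA, hUπB⟩ := (hP.phases_eq U).1 ⟨hUA, hUB⟩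
  obtain ⟨V, hV, hUfV⟩ := hP'.prod.phase f (U ≫ f)
    (by rw [Category.assoc, hfπA, reassoc_of% hUπA])
    (by rw [Category.assoc, hfπB, reassoc_of% hUπB])
  exact ⟨V, (hP'.phases_eq V).2 hV, hUfV⟩

end IsPhasedBiproduct₂

theorem stmt_17_general [HasZeroMorphisms C]
    (hbip : ∀ A B : C, ∃ (P : C) (κA : A ⟶ P) (κB : B ⟶ P) (πA : P ⟶ A) (πB : P ⟶ B),
      IsPhasedBiproduct₂ A B P κA κB πA πB) :
    PhasesTransitive C := by
  intro A B P κA κB A' B' P' κA' κB' hP hP' f ⟨g, hg⟩ ⟨h, hh⟩ U hUA hUB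
  obtain ⟨Q, ιA, ιB, πA, πB, hQ⟩ := hbip A B
  obtain ⟨Q', ιA', ιB', πA', πB', hQ'⟩ := hbip A' B'
  obtain ⟨e, heA, heB⟩ := hQ.coprod.exists_iso hP
  obtain ⟨e', heA', heB'⟩ := hQ'.coprod.exists_iso hP'
  have hκA : κA ≫ e.inv = ιA := e.comp_inv_eq.2 heA.symm
  have hκB : κB ≫ e.inv = ιB := e.comp_inv_eq.2 heB.symm
  have hκA' : κA' ≫ e'.inv = ιA' := e'.comp_inv_eq.2 heA'.symm
  have hκB' : κB' ≫ e'.inv = ιB' := e'.comp_inv_eq.2 heB'.symm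
  obtain ⟨hU₀A, hU₀B⟩ := phase_conj e.symm hκA hκB hUA hUB
  obtain ⟨V₀, ⟨hV₀A, hV₀B⟩, hUV₀⟩ := hQ.exists_phase_comp_eq_comp_phase hQ'
    (f := e.hom ≫ f ≫ e'.inv) (by rw [reassoc_of% heA, reassoc_of% hg, hκA'])
    (by rw [reassoc_of% heB, reassoc_of% hh, hκB']) hU₀A hU₀B
  refine ⟨e'.inv ≫ V₀ ≫ e'.hom, phase_conj e' heA' heB' hV₀A hV₀B, ?_⟩
  calc U ≫ f = e.inv ≫ ((e.hom ≫ U ≫ e.inv) ≫ e.hom ≫ f ≫ e'.inv) ≫ e'.hom := by simp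
    _ = e.inv ≫ ((e.hom ≫ f ≫ e'.inv) ≫ V₀) ≫ e'.hom := congrArg (e.inv ≫ · ≫ e'.hom) hUV₀
    _ = f ≫ e'.inv ≫ V₀ ≫ e'.hom := by simp

/-- in a category with zero morphisms, a zero object and binary phased
biproducts, all phased coproducts have transitive phases. -/
theorem stmt_17 [HasZeroMorphisms C] [HasZeroObject C]
    (hbip : ∀ A B : C, ∃ (P : C) (κA : A ⟶ P) (κB : B ⟶ P) (πA : P ⟶ A) (πB : P ⟶ B),
      IsPhasedBiproduct₂ A B P κA κB πA πB) :
    PhasesTransitive C :=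
  stmt_17_general hbip
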